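/- Let y ≤ x, 0 ≤ s ≤ t with x − y ≤ (t−s)^{1/2}. Then ∫₀ˢ ∫_ℝ (P_{t−s+r} 1_{[y,x]}(z) − P_r 1_{[y,x]}(z))² dz dr ≤ (1/2)(t−s)(x−y), using the inequality 1 − e^{−a} ≤ a for a ≥ 0. -/

import Mathlib

/-!
Write `g_a = P_a 1_I` for `I = [y, x]` of length `L`. Symmetry of `P_a` and the semigroup property
give `⟨g_a, g_b⟩ = Q (a + b)` with `Q c = ⟨1_I, P_c 1_I⟩ = E[(L - √c |Z|)⁺]`, `Z` standard Gaussian;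
so `Q` is antitone with `0 ≤ Q ≤ L`. For `r > 0` the inner integral is therefore
`Q (2u + 2r) - 2 Q (u + 2r) + Q (2r) ≤ Q (2r) - Q (2r + u)`, `u = t - s`, and integrating in `r`
telescopes to `(∫₀ᵘ Q - ∫_{2s}^{2s+u} Q) / 2 ≤ u L / 2`.
-/

open MeasureTheory Real Filter

noncomputable def heatKernel (t x : ℝ) : ℝ :=
  (1 / Real.sqrt (2 * Real.pi * t)) * Real.exp (-x ^ 2 / (2 * t))

noncomputable def heatP (t : ℝ) (f : ℝ → ℝ) (x : ℝ) : ℝ :=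
  if t = 0 then f x else ∫ y : ℝ, heatKernel t (x - y) * f y

noncomputable def scaled (N : ℝ) (f : ℝ → ℝ) (x : ℝ) : ℝ :=
  (1 / Real.sqrt N) * f (x / N)

noncomputable def ft (f : ℝ → ℝ) (z : ℝ) : ℂ :=
  ∫ y : ℝ, (f y : ℂ) * Complex.exp (Complex.I * z * y)

open Set ProbabilityTheory

section HeatKernel

variable {a b t : ℝ}

lemma heatKernel_nonneg (t x : ℝ) : 0 ≤ heatKernel t x := by
  unfold heatKernel; positivity

lemma continuous_heatKernel (t : ℝ) : Continuous (heatKernel t) := by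
  unfold heatKernel; fun_prop

lemma heatKernel_eq_gaussianPDFReal (ht : 0 ≤ t) :
    heatKernel t = gaussianPDFReal 0 t.toNNReal := by
  ext x
  simp [heatKernel, gaussianPDFReal, Real.coe_toNNReal _ ht]

lemma integrable_heatKernel (ht : 0 ≤ t) : Integrable (heatKernel t) := by
  rw [heatKernel_eq_gaussianPDFReal ht]
  exact integrable_gaussianPDFReal _ _

lemma integral_heatKernel (ht : 0 < t) : ∫ x, heatKernel t x = 1 := by
  rw [heatKernel_eq_gaussianPDFReal ht.le]
  exact integral_gaussianPDFReal_eq_one _ (by simpa using ht)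

lemma heatKernel_le (ht : 0 ≤ t) (x : ℝ) : heatKernel t x ≤ 1 / √(2 * π * t) := by
  unfold heatKernel
  have : -x ^ 2 / (2 * t) ≤ 0 := div_nonpos_of_nonpos_of_nonneg (by nlinarith) (by positivity)
  exact mul_le_of_le_one_right (by positivity) (exp_le_one_iff.2 this)

lemma sqrt_mul_heatKernel_sqrt_mul (ht : 0 < t) (z : ℝ) :
    √t * heatKernel t (√t * z) = heatKernel 1 z := by
  have hst : √t ≠ 0 := (sqrt_pos.2 ht).ne'
  have h2π : √(2 * π) ≠ 0 := by positivity
  unfold heatKernel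
  rw [mul_pow, sq_sqrt ht.le, sqrt_mul (by positivity)]
  field_simp

lemma integral_heatKernel_mul_heatKernel (ha : 0 < a) (hb : 0 < b) (p q : ℝ) :
    ∫ z, heatKernel a (z - p) * heatKernel b (z - q) = heatKernel (a + b) (p - q) := by
  set β := (a + b) / (2 * a * b)
  set m := (b * p + a * q) / (a + b)
  have hsplit : ∀ z, heatKernel a (z - p) * heatKernel b (z - q)
      = (1 / √(2 * π * a) * (1 / √(2 * π * b)) * exp (-(p - q) ^ 2 / (2 * (a + b))))
        * exp (-β * (z - m) ^ 2) := by
    intro z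
    have hexp : -(z - p) ^ 2 / (2 * a) + -(z - q) ^ 2 / (2 * b)
        = -(p - q) ^ 2 / (2 * (a + b)) + -β * (z - m) ^ 2 := by
      simp only [β, m]; field_simp; ring
    unfold heatKernel
    rw [mul_mul_mul_comm, ← exp_add, hexp, exp_add]
    ring
  simp only [hsplit]
  rw [integral_const_mul, integral_sub_right_eq_self (fun z => exp (-β * z ^ 2)) m,
    integral_gaussian]
  unfold heatKernel
  rw [mul_right_comm]
  congr 1
  rw [div_mul_div_comm, one_mul, ← sqrt_mul (by positivity), one_div, one_div, ← sqrt_inv,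
    ← sqrt_inv, ← sqrt_mul' _ (by positivity)]
  congr 1
  simp only [β]
  field_simp

end HeatKernel

/-- `heatConv μ a = P_a μ`, the heat flow at time `a` started from the finite measure `μ`. -/
noncomputable def heatConv (μ : Measure ℝ) (a z : ℝ) : ℝ :=
  ∫ q, heatKernel a (z - q) ∂μ

section HeatConv

variable {μ : Measure ℝ} {a b : ℝ}

lemma heatConv_nonneg (a z : ℝ) : 0 ≤ heatConv μ a z :=
  integral_nonneg fun _ => heatKernel_nonneg _ _

variable [IsFiniteMeasure μ]

lemma heatConv_le (ha : 0 ≤ a) (z : ℝ) : heatConv μ a z ≤ μ.real univ * (1 / √(2 * π * a)) := by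
  rw [← smul_eq_mul, ← integral_const]
  exact integral_mono_of_nonneg (ae_of_all _ fun _ => heatKernel_nonneg _ _)
    (integrable_const _) (ae_of_all _ fun _ => heatKernel_le ha _)

lemma continuous_heatConv (ha : 0 ≤ a) : Continuous (heatConv μ a) :=
  continuous_of_dominated
    (fun z => ((continuous_heatKernel a).comp (continuous_sub_left z)).aestronglyMeasurable)
    (fun z => ae_of_all _ fun q => by
      rw [norm_of_nonneg (heatKernel_nonneg _ _)]; exact heatKernel_le ha _)
    (integrable_const _)
    (ae_of_all _ fun q => (continuous_heatKernel a).comp (continuous_sub_right q))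

lemma integrable_heatKernel_sub_prod (ha : 0 ≤ a) :
    Integrable (fun p : ℝ × ℝ => heatKernel a (p.1 - p.2)) (volume.prod μ) := by
  simpa using (integrable_const (1 : ℝ)).convolution_integrand (ContinuousLinearMap.mul ℝ ℝ)
    (integrable_heatKernel ha)

lemma integrable_heatConv (ha : 0 ≤ a) : Integrable (heatConv μ a) :=
  (integrable_heatKernel_sub_prod ha).integral_prod_left

lemma integral_heatKernel_mul_heatConv (ha : 0 < a) (hb : 0 < b) (p : ℝ) :
    ∫ z, heatKernel a (z - p) * heatConv μ b z = heatConv μ (a + b) p := by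
  simp only [heatConv, ← integral_const_mul]
  rw [integral_integral_swap]
  · exact integral_congr_ae (ae_of_all _ fun q => integral_heatKernel_mul_heatKernel ha hb p q)
  exact (integrable_heatKernel_sub_prod hb.le).bdd_mul
    ((continuous_heatKernel a).comp (continuous_fst.sub continuous_const)).aestronglyMeasurable
    (ae_of_all _ fun _ => by
      rw [norm_of_nonneg (heatKernel_nonneg _ _)]; exact heatKernel_le ha.le _)

lemma integral_heatConv_mul_heatConv (ha : 0 < a) (hb : 0 < b) :
    ∫ z, heatConv μ a z * heatConv μ b z = ∫ p, heatConv μ (a + b) p ∂μ := by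
  have hunfold : ∀ z, heatConv μ a z * heatConv μ b z
      = ∫ p, heatKernel a (z - p) * heatConv μ b z ∂μ := fun z => (integral_mul_const _ _).symm
  simp only [hunfold]
  rw [integral_integral_swap]
  · exact integral_congr_ae (ae_of_all _ fun p => integral_heatKernel_mul_heatConv ha hb p)
  exact (integrable_heatKernel_sub_prod ha.le).mul_bdd
    ((continuous_heatConv hb.le).comp continuous_fst).aestronglyMeasurable
    (ae_of_all _ fun _ => by
      rw [norm_of_nonneg (heatConv_nonneg _ _)]; exact heatConv_le hb.le _)

lemma integral_sq_heatConv_sub (ha : 0 < a) (hb : 0 < b) :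
    ∫ z, (heatConv μ a z - heatConv μ b z) ^ 2
      = ∫ p, heatConv μ (2 * a) p ∂μ - 2 * ∫ p, heatConv μ (a + b) p ∂μ
        + ∫ p, heatConv μ (2 * b) p ∂μ := by
  have hint : ∀ {c d : ℝ}, 0 < c → 0 < d →
      Integrable (fun z => heatConv μ c z * heatConv μ d z) := fun hc hd =>
    (integrable_heatConv hc.le).mul_bdd (continuous_heatConv hd.le).aestronglyMeasurable
      (ae_of_all _ fun _ => by rw [norm_of_nonneg (heatConv_nonneg _ _)]; exact heatConv_le hd.le _)
  have hexpand : ∀ z, (heatConv μ a z - heatConv μ b z) ^ 2 = heatConv μ a z * heatConv μ a z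
      - 2 * (heatConv μ a z * heatConv μ b z) + heatConv μ b z * heatConv μ b z := fun z => by ring
  simp only [hexpand]
  rw [integral_add, integral_sub, integral_const_mul, integral_heatConv_mul_heatConv ha ha,
    integral_heatConv_mul_heatConv ha hb, integral_heatConv_mul_heatConv hb hb,
    two_mul a, two_mul b]
  exacts [hint ha ha, (hint ha hb).const_mul 2, (hint ha ha).sub ((hint ha hb).const_mul 2),
    hint hb hb]

end HeatConv

lemma heatP_indicator_one {s : Set ℝ} (hs : MeasurableSet s) {a : ℝ} (ha : a ≠ 0) (z : ℝ) :
    heatP a (s.indicator 1) z = heatConv (volume.restrict s) a z := by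
  rw [heatP, if_neg ha, heatConv, ← integral_indicator hs]
  congr 1 with q
  by_cases hq : q ∈ s <;> simp [hq]

lemma heatConv_restrict_eq_integral {s : Set ℝ} (hs : MeasurableSet s) {c : ℝ} (hc : 0 < c)
    (p : ℝ) :
    heatConv (volume.restrict s) c p = ∫ z, heatKernel 1 z * s.indicator 1 (p - √c * z) := by
  have hc' : 0 < √c := sqrt_pos.2 hc
  calc heatConv (volume.restrict s) c p
      = ∫ q, heatKernel c (p - q) * s.indicator 1 q := by
        rw [← heatP_indicator_one hs hc.ne', heatP, if_neg hc.ne']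
    _ = ∫ w, heatKernel c w * s.indicator 1 (p - w) := by
        rw [← integral_sub_left_eq_self _ volume p]; simp only [sub_sub_cancel]
    _ = √c * ∫ z, heatKernel c (√c * z) * s.indicator 1 (p - √c * z) := by
        rw [Measure.integral_comp_mul_left (fun w => heatKernel c w * s.indicator 1 (p - w)),
          abs_inv, abs_of_pos hc', smul_eq_mul, mul_inv_cancel_left₀ hc'.ne']
    _ = ∫ z, heatKernel 1 z * s.indicator 1 (p - √c * z) := by
        rw [← integral_const_mul]
        congr 1 with z
        rw [← sqrt_mul_heatKernel_sqrt_mul hc, mul_assoc]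

lemma setIntegral_Icc_indicator_Icc_sub {y x : ℝ} (w : ℝ) :
    ∫ p in Icc y x, (Icc y x).indicator (1 : ℝ → ℝ) (p - w) = max (x - y - |w|) 0 := by
  have hshift : (fun p => (Icc y x).indicator (1 : ℝ → ℝ) (p - w))
      = (Icc (y + w) (x + w)).indicator 1 := by
    rw [← preimage_sub_const_Icc]; rfl
  rw [hshift, integral_indicator_one measurableSet_Icc,
    measureReal_restrict_apply measurableSet_Icc, Icc_inter_Icc, volume_real_Icc]
  rcases le_total 0 w with hw | hw
  · rw [max_eq_left (by linarith : y ≤ y + w), min_eq_right (by linarith : x ≤ x + w),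
      abs_of_nonneg hw]
    ring_nf
  · rw [max_eq_right (by linarith : y + w ≤ y), min_eq_left (by linarith : x + w ≤ x),
      abs_of_nonpos hw]
    ring_nf

/-- `E[(L - √c |Z|)⁺]` for a standard Gaussian `Z`: the mean overlap of an interval of length `L`
with its translate by `√c Z`. -/
noncomputable def gaussTent (L c : ℝ) : ℝ :=
  ∫ z, max (L - √c * |z|) 0 * heatKernel 1 z

section GaussTent

variable {L : ℝ}

lemma tent_le (hL : 0 ≤ L) (c z : ℝ) : max (L - √c * |z|) 0 ≤ L :=
  max_le (by nlinarith [sqrt_nonneg c, abs_nonneg z]) hL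

lemma integrable_tent_mul_heatKernel (hL : 0 ≤ L) (c : ℝ) :
    Integrable fun z => max (L - √c * |z|) 0 * heatKernel 1 z :=
  (integrable_heatKernel zero_le_one).bdd_mul (by fun_prop) (ae_of_all _ fun z => by
    rw [norm_of_nonneg (le_max_right _ _)]; exact tent_le hL c z)

lemma gaussTent_nonneg (L c : ℝ) : 0 ≤ gaussTent L c :=
  integral_nonneg fun _ => mul_nonneg (le_max_right _ _) (heatKernel_nonneg _ _)

lemma gaussTent_le (hL : 0 ≤ L) (c : ℝ) : gaussTent L c ≤ L := by
  calc gaussTent L c ≤ ∫ z, L * heatKernel 1 z :=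
        integral_mono (integrable_tent_mul_heatKernel hL c)
          ((integrable_heatKernel zero_le_one).const_mul L)
          fun z => mul_le_mul_of_nonneg_right (tent_le hL c z) (heatKernel_nonneg _ _)
    _ = L := by rw [integral_const_mul, integral_heatKernel one_pos, mul_one]

lemma antitone_gaussTent (hL : 0 ≤ L) : Antitone (gaussTent L) := fun c c' hcc' =>
  integral_mono (integrable_tent_mul_heatKernel hL c') (integrable_tent_mul_heatKernel hL c)
    fun z => mul_le_mul_of_nonneg_right
      (max_le_max (by gcongr) le_rfl) (heatKernel_nonneg _ _)

end GaussTent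

lemma setIntegral_heatConv_restrict_Icc (y x : ℝ) {c : ℝ} (hc : 0 < c) :
    ∫ p in Icc y x, heatConv (volume.restrict (Icc y x)) c p = gaussTent (x - y) c := by
  simp only [heatConv_restrict_eq_integral measurableSet_Icc hc]
  rw [integral_integral_swap]
  · refine integral_congr_ae (ae_of_all _ fun z => ?_)
    dsimp only
    rw [integral_const_mul, setIntegral_Icc_indicator_Icc_sub, abs_mul,
      abs_of_nonneg (sqrt_nonneg c), mul_comm]
  have hdom : Integrable (fun w : ℝ × ℝ => heatKernel 1 w.2)
      ((volume.restrict (Icc y x)).prod volume) := by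
    simpa using (integrable_const (1 : ℝ)).mul_prod (integrable_heatKernel zero_le_one)
  refine hdom.mul_bdd (c := 1) ?_ (ae_of_all _ fun _ => ?_)
  · exact ((measurable_one.indicator measurableSet_Icc).comp
      (measurable_fst.sub (measurable_const.mul measurable_snd))).aestronglyMeasurable
  · exact (norm_indicator_le_norm_self _ _).trans (by simp)

lemma Antitone.integral_second_difference_le {Q : ℝ → ℝ} {L u s : ℝ} (hQ : Antitone Q)
    (hQ0 : ∀ c, 0 ≤ Q c) (hQL : ∀ c, Q c ≤ L) (hu : 0 ≤ u) (hs : 0 ≤ s) :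
    ∫ r in 0..s, (Q (2 * (u + r)) - 2 * Q (u + r + r) + Q (2 * r)) ≤ u * L / 2 := by
  have hQi : ∀ {f : ℝ → ℝ} {a b : ℝ}, Monotone f →
      IntervalIntegrable (fun r => Q (f r)) volume a b :=
    fun hf => (hQ.comp_monotone hf).intervalIntegrable
  calc ∫ r in 0..s, (Q (2 * (u + r)) - 2 * Q (u + r + r) + Q (2 * r))
      ≤ ∫ r in 0..s, (Q (2 * r) - Q (2 * r + u)) := by
        refine intervalIntegral.integral_mono_on hs
          (((hQi fun _ _ h => by linarith).sub ((hQi fun _ _ h => by linarith).const_mul 2)).add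
            (hQi fun _ _ h => by linarith))
          ((hQi fun _ _ h => by linarith).sub (hQi fun _ _ h => by linarith)) fun r _ => ?_
        have := hQ (show 2 * r + u ≤ 2 * (u + r) by linarith)
        rw [show u + r + r = 2 * r + u by ring]
        linarith
    _ = ((∫ c in 0..u, Q c) - ∫ c in 2 * s..2 * s + u, Q c) / 2 := by
        rw [intervalIntegral.integral_comp_mul_left (fun c => Q c - Q (c + u)) two_ne_zero,
          intervalIntegral.integral_sub hQ.intervalIntegrable
            (hQi (f := (· + u)) fun _ _ h => by linarith),
          intervalIntegral.integral_comp_add_right, mul_zero, zero_add,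
          intervalIntegral.integral_interval_sub_interval_comm hQ.intervalIntegrable
            hQ.intervalIntegrable hQ.intervalIntegrable]
        simp [div_eq_inv_mul]
    _ ≤ (∫ _ in 0..u, L) / 2 := by
        gcongr
        have hpos : 0 ≤ ∫ c in 2 * s..2 * s + u, Q c :=
          intervalIntegral.integral_nonneg (by linarith) fun c _ => hQ0 c
        have hle : ∫ c in 0..u, Q c ≤ ∫ _ in 0..u, L :=
          intervalIntegral.integral_mono_on hu hQ.intervalIntegrable intervalIntegrable_const
            fun c _ => hQL c
        linarith
    _ = u * L / 2 := by simp

theorem stmt15_general (y x s t : ℝ) (hyx : y ≤ x) (hs : 0 ≤ s) (hst : s ≤ t) :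
    (∫ r in (0:ℝ)..s, ∫ z : ℝ,
        (heatP (t - s + r) (Set.indicator (Set.Icc y x) 1) z
          - heatP r (Set.indicator (Set.Icc y x) 1) z) ^ 2)
      ≤ (1 / 2) * (t - s) * (x - y) := by
  have hu : 0 ≤ t - s := sub_nonneg.2 hst
  have hL : 0 ≤ x - y := sub_nonneg.2 hyx
  have hintegrand : ∀ r ∈ Ioc 0 s,
      ∫ z, (heatP (t - s + r) ((Icc y x).indicator 1) z - heatP r ((Icc y x).indicator 1) z) ^ 2
        = gaussTent (x - y) (2 * (t - s + r)) - 2 * gaussTent (x - y) (t - s + r + r)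
          + gaussTent (x - y) (2 * r) := by
    rintro r ⟨hr, -⟩
    have hur : 0 < t - s + r := by linarith
    simp only [heatP_indicator_one measurableSet_Icc hur.ne',
      heatP_indicator_one measurableSet_Icc hr.ne']
    rw [integral_sq_heatConv_sub hur hr,
      setIntegral_heatConv_restrict_Icc _ _ (by linarith : 0 < 2 * (t - s + r)),
      setIntegral_heatConv_restrict_Icc _ _ (by linarith : 0 < t - s + r + r),
      setIntegral_heatConv_restrict_Icc _ _ (by linarith : 0 < 2 * r)]
  rw [intervalIntegral.integral_congr_ae
    (ae_of_all _ fun r hr => hintegrand r (by rwa [uIoc_of_le hs] at hr))]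
  linarith [(antitone_gaussTent hL).integral_second_difference_le (gaussTent_nonneg _)
    (gaussTent_le hL) hu hs]

theorem stmt15 (y x s t : ℝ) (hyx : y ≤ x) (hs : 0 ≤ s) (hst : s ≤ t)
    (hxy : x - y ≤ Real.sqrt (t - s)) :
    (∫ r in (0:ℝ)..s, ∫ z : ℝ,
        (heatP (t - s + r) (Set.indicator (Set.Icc y x) 1) z
          - heatP r (Set.indicator (Set.Icc y x) 1) z) ^ 2)
      ≤ (1 / 2) * (t - s) * (x - y) :=
  stmt15_general y x s t hyx hs hst
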